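/- Let T > 0, let π = (π_n) be a sequence of partitions of [0,T] with mesh tending to 0, let p > 1, and let x : [0,T] → ℝ be continuous with finite p-th variation [x]^(p)_π along π. Let A : [0,T] → ℝ be continuous with vanishing p-th variation along π, i.e. for every t ∈ [0,T], Σ_{t^n_i ≤ t} |A(t^n_{i+1}) − A(t^n_i)|^p → 0 as n → ∞. Then x + A has finite p-th variation along π and [x + A]^(p)_π(t) = [x]^(p)_π(t) for every t ∈ [0,T]. -/

import Mathlib

/-!
Over each partition the `p`-th variation sum is the `p`-th power of an `ℓᵖ` norm of the vector of
increments, and the increments of `x + A` are those of `x` plus those of `A`. By Minkowski's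
inequality the `ℓᵖ` norms for `x + A` and for `x` differ by at most the `ℓᵖ` norm for `A`, which
tends to `0`.
-/

open Filter Topology

namespace Real

variable {ι : Type*} {p : ℝ}

theorem abs_Lp_add_sub_Lp_le (s : Finset ι) (f g : ι → ℝ) (hp : 1 ≤ p) :
    |(∑ i ∈ s, |f i + g i| ^ p) ^ (1 / p) - (∑ i ∈ s, |f i| ^ p) ^ (1 / p)| ≤
      (∑ i ∈ s, |g i| ^ p) ^ (1 / p) := by
  rw [abs_sub_le_iff]
  constructor
  · linarith [Lp_add_le s f g hp]
  · have h := Lp_add_le s (fun i => f i + g i) (fun i => -g i) hp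
    simp only [add_neg_cancel_right, abs_neg] at h
    linarith

theorem tendsto_sum_abs_add_rpow_of_tendsto_sum_abs_rpow_zero {α : Type*} {l : Filter α}
    [l.NeBot] {s : α → Finset ι} {f g : α → ι → ℝ} {L : ℝ} (hp : 1 ≤ p)
    (hf : Tendsto (fun a => ∑ i ∈ s a, |f a i| ^ p) l (𝓝 L))
    (hg : Tendsto (fun a => ∑ i ∈ s a, |g a i| ^ p) l (𝓝 0)) :
    Tendsto (fun a => ∑ i ∈ s a, |f a i + g a i| ^ p) l (𝓝 L) := by
  have hp0 : 0 < p := zero_lt_one.trans_le hp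
  have hsum_nonneg : ∀ (h : α → ι → ℝ) a, 0 ≤ ∑ i ∈ s a, |h a i| ^ p := fun h a =>
    Finset.sum_nonneg fun i _ => rpow_nonneg (abs_nonneg _) _
  have hL : 0 ≤ L := ge_of_tendsto' hf (hsum_nonneg f)
  have hroot_f := hf.rpow_const (p := 1 / p) (Or.inr (by positivity))
  have hroot_g := hg.rpow_const (p := 1 / p) (Or.inr (by positivity))
  rw [zero_rpow (by positivity)] at hroot_g
  have hroot_diff : Tendsto (fun a => (∑ i ∈ s a, |f a i + g a i| ^ p) ^ (1 / p) -
      (∑ i ∈ s a, |f a i| ^ p) ^ (1 / p)) l (𝓝 0) :=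
    squeeze_zero_norm (fun a => abs_Lp_add_sub_Lp_le (s a) (f a) (g a) hp) hroot_g
  have hroot : Tendsto (fun a => (∑ i ∈ s a, |f a i + g a i| ^ p) ^ (1 / p)) l
      (𝓝 (L ^ (1 / p))) := by
    simpa only [add_zero, add_sub_cancel] using hroot_f.add hroot_diff
  have hpow := hroot.rpow_const (p := p) (Or.inr hp0.le)
  rw [← rpow_mul hL, one_div_mul_cancel hp0.ne', rpow_one] at hpow
  refine hpow.congr fun a => ?_
  rw [← rpow_mul (hsum_nonneg (fun a i => f a i + g a i) a), one_div_mul_cancel hp0.ne',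
    rpow_one]

theorem ite_abs_rpow {c : Prop} [Decidable c] (a : ℝ) (hp : p ≠ 0) :
    (if c then |a| ^ p else 0) = |if c then a else 0| ^ p := by
  split_ifs <;> simp [zero_rpow hp]

end Real

theorem pvar_add_zero_pvar
    (T : ℝ)
    (π : ℕ → ℕ → ℝ) (N : ℕ → ℕ)
    (p : ℝ) (hp : 1 < p)
    (x : ℝ → ℝ)
    (φ : ℝ → ℝ)
    (hφ : ∀ t ∈ Set.Icc 0 T,
      Tendsto (fun n => ∑ i ∈ Finset.range (N n),
          if π n (i + 1) ≤ t then |x (π n (i + 1)) - x (π n i)| ^ p else 0)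
        atTop (𝓝 (φ t)))
    (A : ℝ → ℝ)
    (hApvar : ∀ t ∈ Set.Icc 0 T,
      Tendsto (fun n => ∑ i ∈ Finset.range (N n),
          if π n (i + 1) ≤ t then |A (π n (i + 1)) - A (π n i)| ^ p else 0)
        atTop (𝓝 0)) :
    ∀ t ∈ Set.Icc 0 T,
      Tendsto (fun n => ∑ i ∈ Finset.range (N n),
          if π n (i + 1) ≤ t then
            |(x (π n (i + 1)) + A (π n (i + 1))) - (x (π n i) + A (π n i))| ^ p
          else 0)
        atTop (𝓝 (φ t)) := by
  intro t ht
  have hp0 : p ≠ 0 := (zero_lt_one.trans hp).ne'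
  let increment (y : ℝ → ℝ) (n i : ℕ) : ℝ :=
    if π n (i + 1) ≤ t then y (π n (i + 1)) - y (π n i) else 0
  have hsum (y : ℝ → ℝ) (n : ℕ) :
      (∑ i ∈ Finset.range (N n),
        if π n (i + 1) ≤ t then |y (π n (i + 1)) - y (π n i)| ^ p else 0) =
      ∑ i ∈ Finset.range (N n), |increment y n i| ^ p :=
    Finset.sum_congr rfl fun i _ => Real.ite_abs_rpow _ hp0
  have hincr_add (n i : ℕ) :
      increment (fun s => x s + A s) n i = increment x n i + increment A n i := by
    simp only [increment]
    split_ifs <;> ring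
  refine (Real.tendsto_sum_abs_add_rpow_of_tendsto_sum_abs_rpow_zero hp.le
    ((hφ t ht).congr (hsum x)) ((hApvar t ht).congr (hsum A))).congr fun n => ?_
  rw [hsum (fun s => x s + A s)]
  simp only [hincr_add]
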